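/- arXiv:2002.01799 — 7 statements merged into one kernel-verified Lean document; each statement's English description precedes it below -/
import Mathlib

section
/- Let C ⊆ F_q^n be a linear code with parity check matrix H having columns H_1,...,H_n. For σ ⊆ {1,...,n}, define the nullity η(σ) = |σ| - dim span{H_i : i ∈ σ}. If D is an i-dimensional subcode of C whose support is minimal (with respect to inclusion) among supports of all i-dimensional subcodes of C, then η(supp(D)) = i. -/
/-!
Let `S = supp D` and let `W` be the subcode of words of `C` supported in `S`. Rank–nullity for
`y ↦ ∑_{j ∈ S} y_j H_j` gives `dim W = η(S)`, and `D ≤ W` gives `i ≤ η(S)`. If `η(S) > i`, pick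
`j ∈ S`: the words of `W` vanishing at `j` still span a space of dimension `≥ i`, so they contain
an `i`-dimensional subcode whose support is strictly smaller than `S`, contradicting minimality.
-/

open Module Submodule LinearMap

namespace Submodule

variable {F V : Type*} [Field F] [AddCommGroup V] [Module F V]

theorem exists_le_finrank_eq (W : Submodule F V) [FiniteDimensional F W] {i : ℕ}
    (hi : i ≤ finrank F W) : ∃ D ≤ W, finrank F D = i := by
  obtain ⟨g, hg⟩ := exists_linearIndependent_of_le_finrank hi
  refine ⟨span F (Set.range (W.subtype ∘ g)), span_le.mpr ?_, ?_⟩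
  · rintro _ ⟨k, rfl⟩
    exact (g k).2
  · rw [finrank_span_eq_card (hg.map' W.subtype W.ker_subtype), Fintype.card_fin]

theorem finrank_le_finrank_inf_ker_add_one [FiniteDimensional F V] (W : Submodule F V)
    (f : V →ₗ[F] F) : finrank F W ≤ finrank F ↥(W ⊓ ker f) + 1 := by
  have hsup := finrank_sup_add_finrank_inf_eq W (ker f)
  have hle := finrank_le (W ⊔ ker f)
  have hrank := finrank_range_add_finrank_ker f
  have hrange : finrank F (range f) ≤ 1 := (finrank_le _).trans (finrank_self F).le
  omega

variable {ι : Type*}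

def support (D : Submodule F (ι → F)) : Set ι := {j | ∃ x ∈ D, x j ≠ 0}

def supportedIn (s : Set ι) : Submodule F (ι → F) := pi sᶜ fun _ => ⊥

theorem mem_supportedIn {s : Set ι} {x : ι → F} : x ∈ supportedIn s ↔ ∀ j ∉ s, x j = 0 := by
  simp [supportedIn, mem_pi]

theorem support_subset_iff {D : Submodule F (ι → F)} {s : Set ι} :
    D.support ⊆ s ↔ D ≤ supportedIn s := by
  refine ⟨fun h x hx => mem_supportedIn.mpr fun j hj => ?_, fun h j ⟨x, hx, hxj⟩ => ?_⟩
  · by_contra hxj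
    exact hj (h ⟨x, hx, hxj⟩)
  · by_contra hj
    exact hxj (mem_supportedIn.mp (h hx) j hj)

theorem support_nonempty_iff {D : Submodule F (ι → F)} : D.support.Nonempty ↔ D ≠ ⊥ := by
  rw [Submodule.ne_bot_iff]
  constructor
  · rintro ⟨j, x, hx, hxj⟩
    exact ⟨x, hx, fun h => hxj (by simp [h])⟩
  · rintro ⟨x, hx, hx0⟩
    obtain ⟨j, hj⟩ := Function.ne_iff.mp hx0
    exact ⟨j, x, hx, hj⟩

variable {κ : Type*}

theorem range_extendByZero_linearMap {f : κ → ι} (hf : f.Injective) :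
    range (Function.ExtendByZero.linearMap F f) = supportedIn (Set.range f) := by
  ext x
  rw [mem_range, mem_supportedIn]
  constructor
  · rintro ⟨y, rfl⟩ j hj
    exact Function.extend_apply' _ _ _ hj
  · intro hx
    refine ⟨x ∘ f, funext fun j => ?_⟩
    by_cases hj : j ∈ Set.range f
    · obtain ⟨k, rfl⟩ := hj
      exact hf.extend_apply _ _ k
    · rw [hx j hj]
      exact Function.extend_apply' _ _ _ hj

variable {M : Type*} [AddCommGroup M] [Module F M] [Fintype ι]

theorem linearCombination_comp_extendByZero_linearMap [Fintype κ] (H : ι → M) {f : κ → ι}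
    (hf : f.Injective) :
    Fintype.linearCombination F H ∘ₗ Function.ExtendByZero.linearMap F f =
      Fintype.linearCombination F (H ∘ f) := by
  classical
  refine LinearMap.ext fun y => ?_
  simp only [coe_comp, Function.comp_apply, Fintype.linearCombination_apply,
    Function.ExtendByZero.linearMap_apply]
  calc ∑ i, Function.extend f y (0 : ι → F) i • H i
      = ∑ i ∈ Finset.univ.map ⟨f, hf⟩, Function.extend f y (0 : ι → F) i • H i := by
        refine (Finset.sum_subset (Finset.subset_univ _) fun i _ hi => ?_).symm
        rw [Function.extend_apply' _ _ _ (by simpa using hi), Pi.zero_apply, zero_smul]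
    _ = ∑ k, y k • H (f k) := by simp [hf.extend_apply]

theorem le_ker_linearCombination_iff (H : ι → M) (D : Submodule F (ι → F)) :
    D ≤ ker (Fintype.linearCombination F H) ↔ ∀ x ∈ D, ∑ j, x j • H j = 0 := by
  simp [SetLike.le_def, Fintype.linearCombination_apply]

theorem finrank_ker_linearCombination_inf_supportedIn (H : ι → M) (s : Set ι) :
    finrank F ↥(ker (Fintype.linearCombination F H) ⊓ supportedIn s) =
      s.ncard - finrank F (span F (H '' s)) := by
  classical
  set e := Function.ExtendByZero.linearMap F ((↑) : s → ι)
  have he : Function.Injective e := Function.extend_injective Subtype.val_injective (0 : ι → F)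
  have hrank := finrank_range_add_finrank_ker (Fintype.linearCombination F (H ∘ (↑) : s → M))
  rw [Fintype.range_linearCombination, Set.range_comp, Subtype.range_coe,
    finrank_fintype_fun_eq_card, ← Nat.card_eq_fintype_card, Nat.card_coe_set_eq] at hrank
  calc finrank F ↥(ker (Fintype.linearCombination F H) ⊓ supportedIn s)
      = finrank F ↥(map e (comap e (ker (Fintype.linearCombination F H)))) := by
        rw [map_comap_eq, range_extendByZero_linearMap Subtype.val_injective, Subtype.range_coe,
          inf_comm]
    _ = finrank F ↥(ker (Fintype.linearCombination F (H ∘ (↑) : s → M))) := by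
        rw [← linearCombination_comp_extendByZero_linearMap H Subtype.val_injective, ker_comp]
        exact (equivMapOfInjective e he _).finrank_eq.symm
    _ = s.ncard - finrank F (span F (H '' s)) := by omega

end Submodule

open Submodule

theorem stmt_2_general {F : Type*} [Field F] {n m : ℕ}
    (H : Fin n → (Fin m → F)) (i : ℕ)
    (supp : Submodule F (Fin n → F) → Set (Fin n))
    (hsupp : ∀ D, supp D = {j : Fin n | ∃ x ∈ D, x j ≠ 0})
    (D : Submodule F (Fin n → F))
    (hDC : ∀ x ∈ D, ∑ j, x j • H j = 0)
    (hdim : Module.finrank F D = i)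
    (hmin : ∀ D' : Submodule F (Fin n → F),
      (∀ x ∈ D', ∑ j, x j • H j = 0) → Module.finrank F D' = i →
      supp D' ⊆ supp D → supp D' = supp D) :
    (supp D).ncard - Module.finrank F (Submodule.span F (H '' supp D)) = i := by
  obtain rfl : supp = Submodule.support := funext hsupp
  rw [← finrank_ker_linearCombination_inf_supportedIn]
  set W := ker (Fintype.linearCombination F H) ⊓ supportedIn D.support
  have hDW : D ≤ W :=
    le_inf ((le_ker_linearCombination_iff H D).mpr hDC) (support_subset_iff.mp le_rfl)
  refine le_antisymm (not_lt.mp fun hlt => ?_) (hdim ▸ finrank_mono hDW)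
  obtain ⟨j, hjW⟩ : W.support.Nonempty :=
    support_nonempty_iff.mpr (one_le_finrank_iff.mp (by omega))
  have hjD : j ∈ D.support := support_subset_iff.mpr inf_le_right hjW
  obtain ⟨D', hD'le, hD'dim⟩ := exists_le_finrank_eq (i := i) (W ⊓ ker (LinearMap.proj j))
    (by have := finrank_le_finrank_inf_ker_add_one W (LinearMap.proj j); omega)
  have hD'W : D' ≤ W := hD'le.trans inf_le_left
  have hjD' : j ∉ D'.support := fun ⟨x, hx, hxj⟩ => hxj (hD'le hx).2
  have hD'D : D'.support = D.support :=
    hmin D' ((le_ker_linearCombination_iff H D').mp (hD'W.trans inf_le_left)) hD'dim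
      (support_subset_iff.mpr (hD'W.trans inf_le_right))
  exact hjD' (hD'D ▸ hjD)

/-- If `D` is an `i`-dimensional subcode of `C = {x | ∑ j, x j • H j = 0}`
whose support is minimal (w.r.t. inclusion) among supports of all `i`-dimensional subcodes,
then the nullity `η(supp D) = |supp D| - dim span{H j : j ∈ supp D}` equals `i`. -/
theorem stmt_2 {F : Type*} [Field F] [Fintype F] {n m : ℕ}
    (H : Fin n → (Fin m → F)) (i : ℕ)
    (supp : Submodule F (Fin n → F) → Set (Fin n))
    (hsupp : ∀ D, supp D = {j : Fin n | ∃ x ∈ D, x j ≠ 0})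
    (D : Submodule F (Fin n → F))
    (hDC : ∀ x ∈ D, ∑ j, x j • H j = 0)
    (hdim : Module.finrank F D = i)
    (hmin : ∀ D' : Submodule F (Fin n → F),
      (∀ x ∈ D', ∑ j, x j • H j = 0) → Module.finrank F D' = i →
      supp D' ⊆ supp D → supp D' = supp D) :
    (supp D).ncard - Module.finrank F (Submodule.span F (H '' supp D)) = i :=
  stmt_2_general H i supp hsupp D hDC hdim hmin
end

section
/- Let C ⊆ F_q^n be a linear code with parity check matrix H having columns H_1,...,H_n, and for σ ⊆ {1,...,n} let η(σ) = |σ| - dim span{H_i : i ∈ σ}. If σ is minimal (with respect to inclusion) among subsets with η(σ) = i, then there exists an i-dimensional subcode D of C with minimal support among i-dimensional subcodes, such that supp(D) = σ. -/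
/-!
Let `V(τ)` be the vectors supported in `τ`. Rank–nullity for `x ↦ ∑ x j • H j` on `V(τ)`, whose
image is `span (H '' τ)`, gives `dim (C ⊓ V(τ)) = η(τ)`. Take `D = C ⊓ V(σ)`, of dimension `i`.
Its support `τ ⊆ σ` satisfies `C ⊓ V(τ) = D`, so `η(τ) = i` and minimality forces `τ = σ`.
Any `i`-dimensional subcode with support inside `σ` lies in `D`, hence equals `D`.
-/

open Module Submodule

theorem Submodule.finrank_map_add_finrank_inf_ker {K V W : Type*} [DivisionRing K]
    [AddCommGroup V] [Module K V] [AddCommGroup W] [Module K W]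
    (p : Submodule K V) [FiniteDimensional K p] (f : V →ₗ[K] W) :
    finrank K (p.map f) + finrank K ↥(p ⊓ LinearMap.ker f) = finrank K p := by
  have h := (f.domRestrict p).finrank_range_add_finrank_ker
  rwa [LinearMap.range_domRestrict, LinearMap.ker_domRestrict,
    ((comap p.subtype (LinearMap.ker f)).equivMapOfInjective _ p.injective_subtype).finrank_eq,
    map_comap_subtype] at h

namespace LinearCode

variable {K ι M : Type*} [Field K] [AddCommGroup M] [Module K M]

def support (D : Submodule K (ι → K)) : Set ι := {j | ∃ x ∈ D, x j ≠ 0}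

variable (K) in
def supportedIn (τ : Set ι) : Submodule K (ι → K) :=
  ⨅ j ∈ τᶜ, LinearMap.ker (LinearMap.proj j)

theorem mem_supportedIn {τ : Set ι} {x : ι → K} : x ∈ supportedIn K τ ↔ ∀ j ∉ τ, x j = 0 := by
  simp [supportedIn]

theorem supportedIn_mono {τ τ' : Set ι} (h : τ ⊆ τ') : supportedIn K τ ≤ supportedIn K τ' :=
  fun _ hx ↦ mem_supportedIn.2 fun j hj ↦ mem_supportedIn.1 hx j (fun h' ↦ hj (h h'))

theorem le_supportedIn_iff {D : Submodule K (ι → K)} {τ : Set ι} :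
    D ≤ supportedIn K τ ↔ support D ⊆ τ := by
  simp only [SetLike.le_def, mem_supportedIn, support, Set.subset_def, Set.mem_ofPred_eq]
  grind

theorem le_supportedIn_support (D : Submodule K (ι → K)) : D ≤ supportedIn K (support D) :=
  le_supportedIn_iff.2 subset_rfl

theorem finrank_supportedIn [Finite ι] (τ : Set ι) : finrank K (supportedIn K τ) = τ.ncard := by
  classical
  have := Fintype.ofFinite ι
  rw [supportedIn, (LinearMap.iInfKerProjEquiv K (fun _ ↦ K) (disjoint_compl_right (a := τ))
    (by simp)).finrank_eq, finrank_fintype_fun_eq_card, Set.ncard_eq_toFinset_card',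
    Set.toFinset_card]

theorem map_supportedIn [Fintype ι] (H : ι → M) (τ : Set ι) :
    (supportedIn K τ).map (Fintype.linearCombination K H) = span K (H '' τ) := by
  classical
  apply le_antisymm
  · rintro _ ⟨x, hx, rfl⟩
    rw [Fintype.linearCombination_apply]
    refine sum_mem fun j _ ↦ ?_
    by_cases hj : j ∈ τ
    · exact smul_mem _ _ (subset_span ⟨j, hj, rfl⟩)
    · simp [mem_supportedIn.1 hx j hj]
  · rw [span_le]
    rintro _ ⟨j, hj, rfl⟩
    refine ⟨Pi.single j 1, mem_supportedIn.2 fun k hk ↦ ?_, by simp⟩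
    exact Pi.single_eq_of_ne (by rintro rfl; exact hk hj) 1

variable [Fintype ι]

variable (K) in
def code (H : ι → M) : Submodule K (ι → K) := LinearMap.ker (Fintype.linearCombination K H)

theorem mem_code {H : ι → M} {x : ι → K} : x ∈ code K H ↔ ∑ j, x j • H j = 0 := by
  rw [code, LinearMap.mem_ker, Fintype.linearCombination_apply]

variable (K) in
noncomputable def nullity (H : ι → M) (τ : Set ι) : ℕ := τ.ncard - finrank K (span K (H '' τ))

theorem finrank_code_inf_supportedIn (H : ι → M) (τ : Set ι) :
    finrank K ↥(code K H ⊓ supportedIn K τ) = nullity K H τ := by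
  have h := (supportedIn K τ).finrank_map_add_finrank_inf_ker (Fintype.linearCombination K H)
  rw [map_supportedIn, finrank_supportedIn, inf_comm] at h
  rw [nullity, ← h, code, Nat.add_sub_cancel_left]

theorem support_code_inf_supportedIn_of_minimal {H : ι → M} {σ : Set ι}
    (hσ : ∀ τ ⊆ σ, nullity K H τ = nullity K H σ → τ = σ) :
    support (code K H ⊓ supportedIn K σ) = σ := by
  set D := code K H ⊓ supportedIn K σ
  have hDσ : support D ⊆ σ := le_supportedIn_iff.1 inf_le_right
  have hD : code K H ⊓ supportedIn K (support D) = D :=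
    le_antisymm (inf_le_inf_left _ (supportedIn_mono hDσ))
      (le_inf inf_le_left (le_supportedIn_support D))
  refine hσ _ hDσ ?_
  rw [← finrank_code_inf_supportedIn, ← finrank_code_inf_supportedIn, hD]

theorem eq_code_inf_supportedIn {H : ι → M} {σ : Set ι} {D : Submodule K (ι → K)}
    (hD : D ≤ code K H) (hDσ : support D ⊆ σ) (hdim : finrank K D = nullity K H σ) :
    D = code K H ⊓ supportedIn K σ :=
  eq_of_le_of_finrank_eq (le_inf hD (le_supportedIn_iff.2 hDσ))
    (by rw [hdim, finrank_code_inf_supportedIn])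

end LinearCode

open LinearCode in
theorem stmt_3_general {F : Type*} [Field F] {n m : ℕ}
    (H : Fin n → (Fin m → F)) (i : ℕ)
    (η : Set (Fin n) → ℕ)
    (hη : ∀ τ : Set (Fin n), η τ = τ.ncard -
      Module.finrank F (Submodule.span F (H '' τ)))
    (supp : Submodule F (Fin n → F) → Set (Fin n))
    (hsupp : ∀ D, supp D = {j : Fin n | ∃ x ∈ D, x j ≠ 0})
    (σ : Set (Fin n)) (hσ : η σ = i)
    (hσmin : ∀ τ : Set (Fin n), τ ⊆ σ → η τ = i → τ = σ) :
    ∃ D : Submodule F (Fin n → F),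
      (∀ x ∈ D, ∑ j, x j • H j = 0) ∧
      Module.finrank F D = i ∧
      (∀ D' : Submodule F (Fin n → F),
        (∀ x ∈ D', ∑ j, x j • H j = 0) → Module.finrank F D' = i →
        supp D' ⊆ supp D → supp D' = supp D) ∧
      supp D = σ := by
  obtain rfl : η = nullity F H := funext hη
  obtain rfl : supp = LinearCode.support := funext hsupp
  subst hσ
  have hD := support_code_inf_supportedIn_of_minimal (K := F) hσmin
  refine ⟨code F H ⊓ supportedIn F σ, fun x hx ↦ mem_code.1 hx.1,
    finrank_code_inf_supportedIn H σ, fun D' hD'H hD'dim hD'σ ↦ ?_, hD⟩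
  rw [eq_code_inf_supportedIn (fun x hx ↦ mem_code.2 (hD'H x hx)) (hD ▸ hD'σ) hD'dim]

/-- If `σ` is minimal (w.r.t. inclusion) among subsets of nullity `i`,
where `η(τ) = |τ| - dim span{H j : j ∈ τ}`, then there is an `i`-dimensional subcode `D`
of `C = {x | ∑ j, x j • H j = 0}` with minimal support among `i`-dimensional subcodes,
such that `supp D = σ`. -/
theorem stmt_3 {F : Type*} [Field F] [Fintype F] {n m : ℕ}
    (H : Fin n → (Fin m → F)) (i : ℕ)
    (η : Set (Fin n) → ℕ)
    (hη : ∀ τ : Set (Fin n), η τ = τ.ncard -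
      Module.finrank F (Submodule.span F (H '' τ)))
    (supp : Submodule F (Fin n → F) → Set (Fin n))
    (hsupp : ∀ D, supp D = {j : Fin n | ∃ x ∈ D, x j ≠ 0})
    (σ : Set (Fin n)) (hσ : η σ = i)
    (hσmin : ∀ τ : Set (Fin n), τ ⊆ σ → η τ = i → τ = σ) :
    ∃ D : Submodule F (Fin n → F),
      (∀ x ∈ D, ∑ j, x j • H j = 0) ∧
      Module.finrank F D = i ∧
      (∀ D' : Submodule F (Fin n → F),
        (∀ x ∈ D', ∑ j, x j • H j = 0) → Module.finrank F D' = i →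
        supp D' ⊆ supp D → supp D' = supp D) ∧
      supp D = σ :=
  stmt_3_general H i η hη supp hsupp σ hσ hσmin
end

section
/- For integers 1 ≤ i ≤ k ≤ n, the Herzog–Kühl product for the MDS shift sequence d_j = n - k + j satisfies ∏_{j≠i, 1≤j≤k} (n-k+j)/|j-i| = binom(n-k+i-1, i-1) · binom(n, k-i). -/
lemma L2 (p : ℕ) : ∀ s : ℕ, ∏ t ∈ Finset.Icc 1 s, ((p:ℚ)+t)/t = Nat.choose (p+s) s := by
  intro s
  induction s with
  | zero => simp
  | succ s ih =>
    rw [Finset.prod_Icc_succ_top (by omega), ih, show p + (s+1) = p + s + 1 by omega]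
    have h := Nat.add_one_mul_choose_eq (p+s) s
    have hq : ((p+s+1 : ℕ) : ℚ) * (Nat.choose (p+s) s : ℚ) = (Nat.choose (p+s+1) (s+1) : ℚ) * ((s:ℚ)+1) := by
      exact_mod_cast congrArg (Nat.cast : ℕ → ℚ) h
    have hs : ((s:ℚ)+1) ≠ 0 := by positivity
    field_simp
    push_cast at hq ⊢
    linarith [hq]

lemma L1 (m r : ℕ) : ∏ j ∈ Finset.Icc 1 r, ((m:ℚ)+j)/((r:ℚ)+1-j) = Nat.choose (m+r) r := by
  have hden : ∏ j ∈ Finset.Icc 1 r, ((r:ℚ)+1-j) = ∏ j ∈ Finset.Icc 1 r, (j:ℚ) := by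
    apply Finset.prod_nbij' (fun j => r+1-j) (fun j => r+1-j)
    · intro a ha; simp only [Finset.mem_Icc] at *; omega
    · intro a ha; simp only [Finset.mem_Icc] at *; omega
    · intro a ha; simp only [Finset.mem_Icc] at ha; omega
    · intro a ha; simp only [Finset.mem_Icc] at ha; omega
    · intro a ha; simp only [Finset.mem_Icc] at ha
      push_cast [Nat.cast_sub (by omega : a ≤ r + 1)]
      ring
  rw [Finset.prod_div_distrib, hden, ← Finset.prod_div_distrib, L2]

/-- For `1 ≤ i ≤ k ≤ n`, the Herzog–Kühl product for the MDS shift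
sequence `d_j = n - k + j` satisfies
`∏_{j≠i, 1≤j≤k} (n-k+j)/|j-i| = C(n-k+i-1, i-1) · C(n, k-i)` in `ℚ`. -/
theorem stmt_6 {n k i : ℕ} (hi : 1 ≤ i) (hik : i ≤ k) (hkn : k ≤ n) :
    ∏ j ∈ (Finset.Icc 1 k).erase i,
        (((n : ℚ) - k + j) / |(j : ℚ) - i|) =
      (Nat.choose (n - k + i - 1) (i - 1) : ℚ) * (Nat.choose n (k - i) : ℚ) := by
  have hsplit : (Finset.Icc 1 k).erase i = Finset.Icc 1 (i-1) ∪ Finset.Icc (i+1) k := by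
    ext j; simp only [Finset.mem_erase, Finset.mem_Icc, Finset.mem_union]; omega
  have hdisj : Disjoint (Finset.Icc 1 (i-1)) (Finset.Icc (i+1) k) := by
    rw [Finset.disjoint_left]; intro a ha hb
    simp only [Finset.mem_Icc] at *; omega
  rw [hsplit, Finset.prod_union hdisj]
  have h1 : ∏ j ∈ Finset.Icc 1 (i-1), (((n : ℚ) - k + j) / |(j : ℚ) - i|)
      = Nat.choose (n - k + i - 1) (i - 1) := by
    rw [show n - k + i - 1 = (n-k) + (i-1) by omega]
    rw [← L1 (n-k) (i-1)]
    apply Finset.prod_congr rfl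
    intro j hj
    simp only [Finset.mem_Icc] at hj
    have hji : (j:ℚ) ≤ i := by exact_mod_cast (by omega : j ≤ i)
    have h1 : |(j : ℚ) - i| = (i:ℚ) - j := by
      rw [abs_of_nonpos (by linarith)]; ring
    rw [h1]
    push_cast [Nat.cast_sub hkn, Nat.cast_sub hi]
    ring_nf
  have h2 : ∏ j ∈ Finset.Icc (i+1) k, (((n : ℚ) - k + j) / |(j : ℚ) - i|)
      = Nat.choose n (k - i) := by
    rw [show (Nat.choose n (k-i) : ℚ) = Nat.choose ((n-k+i) + (k-i)) (k-i) by rw [show n-k+i+(k-i) = n by omega]]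
    rw [← L2 (n-k+i) (k-i)]
    apply Finset.prod_nbij' (fun j => j - i) (fun t => t + i)
    · intro a ha; simp only [Finset.mem_Icc] at *; omega
    · intro a ha; simp only [Finset.mem_Icc] at *; omega
    · intro a ha; simp only [Finset.mem_Icc] at ha; omega
    · intro a ha; simp only [Finset.mem_Icc] at ha; omega
    · intro a ha; simp only [Finset.mem_Icc] at ha
      have hia : (i:ℚ) ≤ a := by exact_mod_cast (by omega : i ≤ a)
      have h1 : |(a : ℚ) - i| = (a:ℚ) - i := by
        rw [abs_of_nonneg (by linarith)]
      rw [h1]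
      push_cast [Nat.cast_sub hkn, Nat.cast_sub (by omega : i ≤ a), Nat.cast_sub hik]
      ring
  rw [h1, h2]
end

section
/- Let q ≥ 2 and 1 ≤ i ≤ k be integers, and set d_j = q^{k-1}(q^j - 1)/(q^{j-1}(q-1)) for 1 ≤ j ≤ k. Then ∏_{j≠i, 1≤j≤k} d_j/|d_j - d_i| = q^{i(i-1)/2} · [k choose i]_q, where [k choose i]_q = ∏_{j=i+1}^{k} (q^j - 1)/(q^{j-i} - 1) is the Gaussian binomial coefficient. -/
/-! With `d_j = q^(k-j) (q^j - 1) / (q - 1)` one has `d_j - d_i = q^(k-j) (q^(j-i) - 1) / (q - 1)`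
for `i ≤ j`. Hence the factor at `j > i` is `(q^j - 1) / (q^(j-i) - 1)` and the factor at `j < i` is
`q^(i-j) (q^j - 1) / (q^(i-j) - 1)`. Under the reflection `j ↦ i - j` of `1 ≤ j < i` the quotients
in the latter factors cancel, and their powers multiply to `q^(1 + ⋯ + (i-1)) = q^(i(i-1)/2)`. -/

open Finset

theorem Finset.prod_Ico_pow_sub {M : Type*} [CommMonoid M] (x : M) (i : ℕ) :
    ∏ j ∈ Ico 1 i, x ^ (i - j) = x ^ (i * (i - 1) / 2) := by
  rw [prod_pow_eq_pow_sum, sum_Ico_reflect (fun j => j) 1 (Nat.le_succ i), Nat.add_sub_cancel_left,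
    Nat.add_sub_cancel, ← sum_range_id]
  rcases i.eq_zero_or_pos with rfl | hi
  · rfl
  · rw [range_eq_Ico, sum_eq_sum_Ico_succ_bot hi, zero_add]

theorem Finset.prod_Ico_div_reflect {G₀ : Type*} [CommGroupWithZero G₀] (f : ℕ → G₀) (i : ℕ)
    (hf : ∀ j ∈ Ico 1 i, f j ≠ 0) :
    ∏ j ∈ Ico 1 i, f j / f (i - j) = 1 := by
  rw [prod_div_distrib, prod_Ico_reflect f 1 (Nat.le_succ i), Nat.add_sub_cancel_left,
    Nat.add_sub_cancel]
  exact div_self (prod_ne_zero_iff.mpr hf)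

theorem Finset.prod_Icc_erase {M : Type*} [CommMonoid M] (f : ℕ → M) {i k : ℕ} (hik : i ≤ k) :
    ∏ j ∈ (Icc 1 k).erase i, f j = (∏ j ∈ Ico 1 i, f j) * ∏ j ∈ Icc (i + 1) k, f j := by
  have hsplit : (Icc 1 k).erase i = Ico 1 i ∪ Icc (i + 1) k := by
    ext j
    simp only [mem_erase, mem_Icc, mem_Ico, mem_union]
    omega
  have hdisj : Disjoint (Ico 1 i) (Icc (i + 1) k) := disjoint_left.mpr fun j h₁ h₂ => by
    simp only [mem_Ico, mem_Icc] at h₁ h₂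
    omega
  rw [hsplit, prod_union hdisj]

section SimplexWeight

variable {K : Type*} [Field K] {x : K} {k i j : ℕ}

/-- `simplexWeight q k j` is the `j`-th generalized Hamming weight of the `q`-ary simplex code of
dimension `k`. -/
def simplexWeight (x : K) (k j : ℕ) : K := x ^ (k - j) * (x ^ j - 1) / (x - 1)

theorem simplexWeight_eq (hx : x ≠ 0) (hjk : j ≤ k) :
    x ^ (k - 1) * (x ^ j - 1) / (x ^ (j - 1) * (x - 1)) = simplexWeight x k j := by
  rcases j with _ | j
  · simp [simplexWeight]
  · have hpow : x ^ (k - 1) = x ^ j * x ^ (k - (j + 1)) := by rw [← pow_add]; congr 1; omega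
    rw [simplexWeight, hpow, Nat.add_sub_cancel, mul_assoc, mul_div_mul_left _ _ (pow_ne_zero j hx)]

theorem simplexWeight_sub_simplexWeight (hij : i ≤ j) (hjk : j ≤ k) :
    simplexWeight x k j - simplexWeight x k i = x ^ (k - j) * (x ^ (j - i) - 1) / (x - 1) := by
  obtain ⟨m, rfl⟩ := Nat.exists_eq_add_of_le hij
  obtain ⟨n, rfl⟩ := Nat.exists_eq_add_of_le hjk
  rw [simplexWeight, simplexWeight, show i + m + n - i = m + n by omega, Nat.add_sub_cancel_left,
    Nat.add_sub_cancel_left]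
  ring

variable [LinearOrder K] [IsStrictOrderedRing K]

theorem simplexWeight_div_abs_sub_of_lt (hx : 1 < x) (hij : i < j) (hjk : j ≤ k) :
    simplexWeight x k j / |simplexWeight x k j - simplexWeight x k i| =
      (x ^ j - 1) / (x ^ (j - i) - 1) := by
  have h₁ : 0 < x - 1 := sub_pos.mpr hx
  have h₂ : 0 < x ^ (j - i) - 1 := sub_pos.mpr (one_lt_pow₀ hx (by omega))
  rw [simplexWeight_sub_simplexWeight hij.le hjk, abs_of_pos (by positivity), simplexWeight,
    div_div_div_cancel_right₀ h₁.ne', mul_div_mul_left _ _ (by positivity)]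

theorem simplexWeight_div_abs_sub_of_gt (hx : 1 < x) (hji : j < i) (hik : i ≤ k) :
    simplexWeight x k j / |simplexWeight x k j - simplexWeight x k i| =
      x ^ (i - j) * ((x ^ j - 1) / (x ^ (i - j) - 1)) := by
  have h₁ : 0 < x - 1 := sub_pos.mpr hx
  have h₂ : 0 < x ^ (i - j) - 1 := sub_pos.mpr (one_lt_pow₀ hx (by omega))
  have hpow : x ^ (k - j) = x ^ (k - i) * x ^ (i - j) := by rw [← pow_add]; congr 1; omega
  rw [abs_sub_comm, simplexWeight_sub_simplexWeight hji.le hik, abs_of_pos (by positivity),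
    simplexWeight, div_div_div_cancel_right₀ h₁.ne', hpow]
  field_simp

end SimplexWeight

theorem stmt_7_general {q k i : ℕ} (hq : 2 ≤ q) (hik : i ≤ k)
    (d : ℕ → ℚ)
    (hd : ∀ j, d j = (q : ℚ) ^ (k - 1) * ((q : ℚ) ^ j - 1) /
      ((q : ℚ) ^ (j - 1) * ((q : ℚ) - 1))) :
    ∏ j ∈ (Finset.Icc 1 k).erase i, (d j / |d j - d i|) =
      (q : ℚ) ^ (i * (i - 1) / 2) *
        ∏ j ∈ Finset.Icc (i + 1) k, (((q : ℚ) ^ j - 1) / ((q : ℚ) ^ (j - i) - 1)) := by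
  have hq₁ : (1 : ℚ) < q := by exact_mod_cast hq
  have hd' : ∀ j ≤ k, d j = simplexWeight (q : ℚ) k j := fun j hj =>
    (hd j).trans (simplexWeight_eq (by positivity) hj)
  have hlow : ∀ j ∈ Ico 1 i, d j / |d j - d i| =
      (q : ℚ) ^ (i - j) * (((q : ℚ) ^ j - 1) / ((q : ℚ) ^ (i - j) - 1)) := fun j hj => by
    rw [mem_Ico] at hj
    rw [hd' j (by omega), hd' i hik, simplexWeight_div_abs_sub_of_gt hq₁ hj.2 hik]
  have hhigh : ∀ j ∈ Icc (i + 1) k, d j / |d j - d i| =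
      ((q : ℚ) ^ j - 1) / ((q : ℚ) ^ (j - i) - 1) := fun j hj => by
    rw [mem_Icc] at hj
    rw [hd' j hj.2, hd' i hik, simplexWeight_div_abs_sub_of_lt hq₁ (by omega) hj.2]
  have hne : ∀ j ∈ Ico 1 i, (q : ℚ) ^ j - 1 ≠ 0 := fun j hj =>
    (sub_pos.mpr (one_lt_pow₀ hq₁ (Nat.one_le_iff_ne_zero.mp (mem_Ico.mp hj).1))).ne'
  rw [prod_Icc_erase _ hik, prod_congr rfl hlow, prod_congr rfl hhigh, prod_mul_distrib,
    prod_Ico_pow_sub, prod_Ico_div_reflect (fun j => (q : ℚ) ^ j - 1) i hne, mul_one]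

/-- For `q ≥ 2`, `1 ≤ i ≤ k`, with `d_j = q^{k-1}(q^j-1)/(q^{j-1}(q-1))`,
the Herzog–Kühl product satisfies
`∏_{j≠i, 1≤j≤k} d_j/|d_j - d_i| = q^{i(i-1)/2} · [k choose i]_q`,
where `[k choose i]_q = ∏_{j=i+1}^{k} (q^j-1)/(q^{j-i}-1)`. -/
theorem stmt_7 {q k i : ℕ} (hq : 2 ≤ q) (hi : 1 ≤ i) (hik : i ≤ k)
    (d : ℕ → ℚ)
    (hd : ∀ j, d j = (q : ℚ) ^ (k - 1) * ((q : ℚ) ^ j - 1) /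
      ((q : ℚ) ^ (j - 1) * ((q : ℚ) - 1))) :
    ∏ j ∈ (Finset.Icc 1 k).erase i, (d j / |d j - d i|) =
      (q : ℚ) ^ (i * (i - 1) / 2) *
        ∏ j ∈ Finset.Icc (i + 1) k, (((q : ℚ) ^ j - 1) / ((q : ℚ) ^ (j - i) - 1)) :=
  stmt_7_general hq hik d hd
end

section
/- Let C be an [n,k]_q linear code in which every nonzero codeword has the same Hamming weight d. Then every j-dimensional subcode of C has support weight d(q^j - 1)/(q^{j-1}(q-1)), for 1 ≤ j ≤ k. -/
/-!
Count the pairs `(x, i)` with `x ∈ D` and `x i ≠ 0`. Summing over `x`, every nonzero codeword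
contributes `d`, so there are `d (q^j - 1)` pairs. Summing over `i`: for `i` in the support of `D`,
evaluation at `i` is a surjective linear functional on `D`, so it is nonzero on exactly
`q^j - q^(j-1)` codewords. Comparing the two counts gives the support weight.
-/

theorem AddMonoidHom.card_ker_mul_card_of_surjective {G H : Type*} [AddGroup G] [AddGroup H]
    (f : G →+ H) (hf : Function.Surjective f) : Nat.card f.ker * Nat.card H = Nat.card G := by
  rw [← f.ker.card_mul_index, AddSubgroup.index_ker, f.range_eq_top.mpr hf, AddSubgroup.card_top]

namespace Submodule

variable {F ι : Type*} [Field F] (D : Submodule F (ι → F))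

theorem ncard_apply_eq_zero_mul_card {i : ι} (hi : ∃ x ∈ D, x i ≠ 0) :
    {x : D | (x : ι → F) i = 0}.ncard * Nat.card F = Nat.card D := by
  let φ : D →ₗ[F] F := (LinearMap.proj i).comp D.subtype
  have hφ : Function.Surjective φ := by
    obtain ⟨x, hxD, hxi⟩ := hi
    intro a
    exact ⟨(a * (x i)⁻¹) • ⟨x, hxD⟩, by simp [φ, hxi]⟩
  rw [← φ.toAddMonoidHom.card_ker_mul_card_of_surjective hφ, ← Nat.card_coe_set_eq]
  rfl

theorem ncard_apply_ne_zero_mul_card [Finite D] {i : ι} (hi : ∃ x ∈ D, x i ≠ 0) :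
    {x : D | (x : ι → F) i ≠ 0}.ncard * Nat.card F = Nat.card D * (Nat.card F - 1) := by
  have hsplit : {x : D | (x : ι → F) i = 0}.ncard + {x : D | (x : ι → F) i ≠ 0}.ncard =
      Nat.card D :=
    Set.ncard_add_ncard_compl _
  calc {x : D | (x : ι → F) i ≠ 0}.ncard * Nat.card F
      = ({x : D | (x : ι → F) i = 0}.ncard + {x : D | (x : ι → F) i ≠ 0}.ncard) * Nat.card F
          - {x : D | (x : ι → F) i = 0}.ncard * Nat.card F := by
        rw [add_mul, Nat.add_sub_cancel_left]
    _ = Nat.card D * (Nat.card F - 1) := by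
        rw [hsplit, D.ncard_apply_eq_zero_mul_card hi, Nat.mul_sub_one]

theorem sum_ncard_support_of_forall_ncard_eq [Fintype D] {d : ℕ}
    (hconst : ∀ x ∈ D, x ≠ 0 → {i | x i ≠ 0}.ncard = d) :
    ∑ x : D, {i | (x : ι → F) i ≠ 0}.ncard = d * (Nat.card D - 1) := by
  classical
  have hweight : ∀ x : D, {i | (x : ι → F) i ≠ 0}.ncard = if x = 0 then 0 else d := by
    intro x
    split_ifs with hx
    · simp [hx]
    · exact hconst x x.2 (by simpa using hx)
  simp only [hweight, Finset.sum_ite, Finset.sum_const_zero, Finset.sum_const, smul_eq_mul,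
    zero_add]
  rw [Finset.filter_ne', Finset.card_erase_of_mem (Finset.mem_univ _), Finset.card_univ,
    Nat.card_eq_fintype_card, mul_comm]

theorem sum_ncard_support_mul_card [Fintype ι] [Fintype D] :
    (∑ x : D, {i | (x : ι → F) i ≠ 0}.ncard) * Nat.card F =
      {i | ∃ x ∈ D, x i ≠ 0}.ncard * (Nat.card D * (Nat.card F - 1)) := by
  classical
  have hswap : ∑ x : D, {i | (x : ι → F) i ≠ 0}.ncard =
      ∑ i, {x : D | (x : ι → F) i ≠ 0}.ncard := by
    simp only [Set.ncard_eq_toFinset_card', Set.toFinset_ofPred, Finset.card_filter]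
    exact Finset.sum_comm
  rw [hswap, Finset.sum_mul, Set.ncard_eq_toFinset_card', Set.toFinset_ofPred,
    Finset.card_filter, Finset.sum_mul]
  refine Finset.sum_congr rfl fun i _ => ?_
  split_ifs with hi
  · rw [one_mul, D.ncard_apply_ne_zero_mul_card hi]
  · push Not at hi
    simp [hi]

end Submodule

theorem stmt_8_general {F : Type*} [Field F] [Fintype F] {n d j : ℕ}
    (C : Submodule F (Fin n → F))
    (hconst : ∀ c ∈ C, c ≠ 0 → ({i : Fin n | c i ≠ 0}).ncard = d)
    (D : Submodule F (Fin n → F)) (hD : D ≤ C) (hdim : Module.finrank F D = j) :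
    (({i : Fin n | ∃ x ∈ D, x i ≠ 0}).ncard : ℚ) =
      (d : ℚ) * ((Fintype.card F : ℚ) ^ j - 1) /
        ((Fintype.card F : ℚ) ^ (j - 1) * ((Fintype.card F : ℚ) - 1)) := by
  have : Fintype D := Fintype.ofFinite D
  have hcard : Nat.card D = Fintype.card F ^ j := by
    rw [← hdim, Nat.card_eq_fintype_card, Module.card_eq_pow_finrank (K := F)]
  have hq : (1 : ℚ) < Fintype.card F := by exact_mod_cast Fintype.one_lt_card
  have key := D.sum_ncard_support_mul_card
  rw [D.sum_ncard_support_of_forall_ncard_eq fun x hx => hconst x (hD hx), hcard,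
    Nat.card_eq_fintype_card] at key
  qify [Nat.one_le_pow j _ Fintype.card_pos, Fintype.card_pos] at key
  rcases j with _ | j
  · simpa [sub_ne_zero.mpr hq.ne'] using key
  · rw [Nat.add_sub_cancel, eq_div_iff (by positivity), pow_succ]
    refine mul_right_cancel₀ (by positivity : (Fintype.card F : ℚ) ≠ 0) ?_
    rw [pow_succ] at key
    linear_combination -key

/-- In an `[n,k]_q` code in which every nonzero codeword has Hamming weight `d`,
every `j`-dimensional subcode (1 ≤ j ≤ k) has support weight `d(q^j-1)/(q^{j-1}(q-1))`. -/
theorem stmt_8 {F : Type*} [Field F] [Fintype F] {n k d j : ℕ}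
    (C : Submodule F (Fin n → F)) (hk : Module.finrank F C = k)
    (hconst : ∀ c ∈ C, c ≠ 0 → ({i : Fin n | c i ≠ 0}).ncard = d)
    (hj1 : 1 ≤ j) (hjk : j ≤ k)
    (D : Submodule F (Fin n → F)) (hD : D ≤ C) (hdim : Module.finrank F D = j) :
    (({i : Fin n | ∃ x ∈ D, x i ≠ 0}).ncard : ℚ) =
      (d : ℚ) * ((Fintype.card F : ℚ) ^ j - 1) /
        ((Fintype.card F : ℚ) ^ (j - 1) * ((Fintype.card F : ℚ) - 1)) :=
  stmt_8_general C hconst D hD hdim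
end

section
/- Every i-dimensional subcode D of the first order Reed–Muller code RM_q(1,m) (the image of the evaluation map V_q(1,m) → F_q^{q^m} on polynomials of degree ≤ 1) has support weight equal to q^m or q^m - q^{m-i}. Consequently every i-minimal subcode has support weight q^m - ⌊q^{m-i}⌋. -/
/-!
The codewords of `RM_q(1,m)` are the affine functions `a ↦ L a + b` on `V = F_q^m`. If a
subcode `D` contains the constants it has no common zero, so its support is all of `V`.
Otherwise `c ↦ c - c 0` is injective on `D`, so the common zeros of `D` form the solution set of
a linear system of rank `i = dim D`, an affine subspace with `q^(m-i)` points. For a minimal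
subcode of full support, `i ≤ m` is impossible: `i` coordinate functions span a subcode of the
same dimension vanishing at `0`. Hence `i > m` and `⌊q^(m-i)⌋ = 0`.
-/

open Module Function Submodule

section CommonZeroSet

variable {R V : Type*} [Semiring R]

def commonZeroSet (D : Submodule R (V → R)) : Set V := {a | ∀ c ∈ D, c a = 0}

lemma compl_commonZeroSet (D : Submodule R (V → R)) :
    (commonZeroSet D)ᶜ = {a | ∃ c ∈ D, c a ≠ 0} := by
  ext a
  simp [commonZeroSet]

lemma commonZeroSet_eq_empty_of_one_mem [Nontrivial R] {D : Submodule R (V → R)}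
    (h1 : (1 : V → R) ∈ D) : commonZeroSet D = ∅ :=
  Set.eq_empty_of_forall_notMem fun _ ha => one_ne_zero (ha 1 h1)

lemma mem_commonZeroSet_of_le_span {D : Submodule R (V → R)} {S : Set (V → R)} {a : V}
    (hS : ∀ c ∈ S, c a = 0) (hD : D ≤ span R S) : a ∈ commonZeroSet D :=
  fun _ hc => (span_le (p := LinearMap.ker (LinearMap.proj a))).mpr hS (hD hc)

end CommonZeroSet

section AffineFunctions

variable {R V : Type*} [CommRing R] [AddCommGroup V] [Module R V]

variable (R V) in
def affineFunctions : Submodule R (V → R) where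
  carrier := {c | ∃ (L : Dual R V) (b : R), ∀ a, c a = L a + b}
  add_mem' := by
    rintro c d ⟨L, b, hc⟩ ⟨L', b', hd⟩
    exact ⟨L + L', b + b', fun a => by simp only [Pi.add_apply, hc, hd, LinearMap.add_apply]; ring⟩
  zero_mem' := ⟨0, 0, fun _ => by simp⟩
  smul_mem' := by
    rintro t c ⟨L, b, hc⟩
    exact ⟨t • L, t • b, fun a => by simp [hc, mul_add]⟩

lemma sub_apply_zero_eq_of_mem_affineFunctions {c : V → R} (hc : c ∈ affineFunctions R V) :
    ∃ L : Dual R V, ∀ a, c a - c 0 = L a := by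
  obtain ⟨L, b, hc⟩ := hc
  exact ⟨L, fun a => by simp [hc]⟩

def affinePairing (D : Submodule R (V → R)) (hD : D ≤ affineFunctions R V) :
    D →ₗ[R] V →ₗ[R] R :=
  LinearMap.mk₂ R (fun c a => (c : V → R) a - (c : V → R) 0)
    (fun _ _ _ => by simp only [Submodule.coe_add, Pi.add_apply]; ring)
    (fun _ _ _ => by simp only [Submodule.coe_smul, Pi.smul_apply, smul_eq_mul]; ring)
    (fun c a a' => by
      obtain ⟨L, hL⟩ := sub_apply_zero_eq_of_mem_affineFunctions (hD c.2)
      simp only [hL, map_add])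
    (fun t c a => by
      obtain ⟨L, hL⟩ := sub_apply_zero_eq_of_mem_affineFunctions (hD c.2)
      simp only [hL, map_smul])

@[simp]
lemma affinePairing_apply {D : Submodule R (V → R)} (hD : D ≤ affineFunctions R V) (c : D)
    (a : V) : affinePairing D hD c a = (c : V → R) a - (c : V → R) 0 :=
  rfl

lemma commonZeroSet_eq_preimage {D : Submodule R (V → R)} (hD : D ≤ affineFunctions R V) :
    commonZeroSet D = (affinePairing D hD).flip ⁻¹' {-(LinearMap.proj 0 ∘ₗ D.subtype)} := by
  ext a
  simp [commonZeroSet, LinearMap.ext_iff]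

end AffineFunctions

lemma Finsupp.eq_zero_or_eq_single_one_of_degree_le_one {σ : Type*} {d : σ →₀ ℕ}
    (hd : d.degree ≤ 1) : d = 0 ∨ ∃ j, d = Finsupp.single j 1 := by
  rcases Nat.le_one_iff_eq_zero_or_eq_one.mp hd with h0 | h1
  · exact Or.inl ((Finsupp.degree_eq_zero_iff d).mp h0)
  · obtain ⟨j, hj⟩ : d ∈ Set.range fun j : σ => Finsupp.single j 1 :=
      Finsupp.range_single_one ▸ h1
    exact Or.inr ⟨j, hj.symm⟩

lemma MvPolynomial.eval_mem_affineFunctions {R σ : Type*} [CommRing R]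
    {f : MvPolynomial σ R} (hf : f.totalDegree ≤ 1) :
    (fun a : σ → R => eval a f) ∈ affineFunctions R (σ → R) := by
  have hfun : (fun a : σ → R => eval a f) =
      ∑ d ∈ f.support, fun a => coeff d f * ∏ j ∈ d.support, a j ^ d j := by
    funext a
    simp [eval_eq]
  rw [hfun]
  refine Submodule.sum_mem _ fun d hd => ?_
  rcases Finsupp.eq_zero_or_eq_single_one_of_degree_le_one ((le_totalDegree hd).trans hf) with
    rfl | ⟨j, rfl⟩
  · exact ⟨0, coeff 0 f, fun a => by simp⟩
  · exact ⟨coeff (Finsupp.single j 1) f • LinearMap.proj j, 0, fun a => by simp⟩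

theorem LinearMap.ncard_preimage_singleton_of_surjective {K V W : Type*} [Field K] [Fintype K]
    [AddCommGroup V] [Module K V] [FiniteDimensional K V] [AddCommGroup W] [Module K W]
    {f : V →ₗ[K] W} (hf : Surjective f) (w : W) :
    (f ⁻¹' {w}).ncard = Fintype.card K ^ (finrank K V - finrank K W) := by
  obtain ⟨a, rfl⟩ := hf w
  have hfiber : f ⁻¹' {f a} = (a + ·) '' (ker f : Set V) := by
    ext x
    refine ⟨fun hx => ⟨x - a, by simp_all, by simp⟩, ?_⟩
    rintro ⟨v, hv, rfl⟩
    simp_all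
  have hker : finrank K (ker f) = finrank K V - finrank K W := by
    have := f.finrank_range_add_finrank_ker
    rw [range_eq_top.mpr hf, finrank_top] at this
    omega
  rw [hfiber, Set.ncard_image_of_injective _ (add_right_injective a), ← Nat.card_coe_set_eq,
    SetLike.coe_sort_coe, natCard_eq_pow_finrank (K := K), hker, Nat.card_eq_fintype_card]

section FiniteField

variable {F V : Type*} [Field F] [AddCommGroup V] [Module F V] {D : Submodule F (V → F)}

lemma affinePairing_injective (hD : D ≤ affineFunctions F V) (h1 : (1 : V → F) ∉ D) :
    Injective (affinePairing D hD) := by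
  rw [injective_iff_map_eq_zero]
  intro c hc
  set b := (c : V → F) 0
  have hconst : (c : V → F) = b • 1 :=
    funext fun a => by simpa [sub_eq_zero] using LinearMap.congr_fun hc a
  by_contra hne
  have hb : b ≠ 0 := fun h => hne (Subtype.ext (by rw [hconst, h, zero_smul]; rfl))
  have := D.smul_mem b⁻¹ c.2
  rw [hconst, smul_smul, inv_mul_cancel₀ hb, one_smul] at this
  exact h1 this

variable [FiniteDimensional F V]

lemma finrank_le_of_one_notMem (hD : D ≤ affineFunctions F V) (h1 : (1 : V → F) ∉ D) :
    finrank F D ≤ finrank F V :=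
  (LinearMap.finrank_le_finrank_of_injective (affinePairing_injective hD h1)).trans
    Subspace.dual_finrank_eq.le

lemma ncard_commonZeroSet_of_one_notMem [Fintype F] (hD : D ≤ affineFunctions F V)
    (h1 : (1 : V → F) ∉ D) :
    (commonZeroSet D).ncard = Fintype.card F ^ (finrank F V - finrank F D) := by
  have hsurj : Surjective (affinePairing D hD).flip :=
    LinearMap.flip_surjective_iff₂.mpr (affinePairing_injective hD h1)
  rw [commonZeroSet_eq_preimage hD, LinearMap.ncard_preimage_singleton_of_surjective hsurj,
    Subspace.dual_finrank_eq]

end FiniteField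

lemma linearIndependent_coord {K ι : Type*} [Field K] [Finite ι] :
    LinearIndependent K (fun (j : ι) (a : ι → K) => a j) := by
  classical
  have hcoord : (fun (j : ι) (a : ι → K) => a j) =
      LinearMap.ltoFun K (ι → K) K K ∘ (Pi.basisFun K ι).dualBasis := by
    funext j a
    simp
  rw [hcoord]
  exact (Pi.basisFun K ι).dualBasis.linearIndependent.map' _
    (LinearMap.ker_eq_bot.mpr DFunLike.coe_injective)

lemma Submodule.exists_le_finrank_eq_s10 {K M : Type*} [Field K] [AddCommGroup M] [Module K M]
    (W : Submodule K M) [FiniteDimensional K W] {k : ℕ} (hk : k ≤ finrank K W) :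
    ∃ U ≤ W, finrank K U = k := by
  let b := Module.finBasis K W
  have hli : LinearIndependent K (W.subtype ∘ b ∘ Fin.castLE hk) :=
    (b.linearIndependent.map' W.subtype W.ker_subtype).comp _ (Fin.castLE_injective hk)
  refine ⟨span K (Set.range (W.subtype ∘ b ∘ Fin.castLE hk)), ?_, ?_⟩
  · exact span_le.mpr (Set.range_subset_iff.mpr fun j => (b _).2)
  · rw [finrank_span_eq_card hli, Fintype.card_fin]

lemma exists_finrank_eq_zero_mem_commonZeroSet {K ι : Type*} [Field K] [Fintype ι]
    {C : Submodule K ((ι → K) → K)} (hC : ∀ j, (fun a : ι → K => a j) ∈ C) {k : ℕ}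
    (hk : k ≤ Fintype.card ι) : ∃ U ≤ C, finrank K U = k ∧ (0 : ι → K) ∈ commonZeroSet U := by
  set coords := span K (Set.range fun (j : ι) (a : ι → K) => a j)
  have := FiniteDimensional.span_of_finite K (Set.finite_range fun (j : ι) (a : ι → K) => a j)
  obtain ⟨U, hU, hUk⟩ := coords.exists_le_finrank_eq_s10 (k := k)
    (by rwa [finrank_span_eq_card linearIndependent_coord])
  refine ⟨U, hU.trans (span_le.mpr (Set.range_subset_iff.mpr hC)), hUk, ?_⟩
  exact mem_commonZeroSet_of_le_span (by simp) hU

lemma le_affineFunctions_of_forall_totalDegree_le_one {R σ : Type*} [CommRing R]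
    {C : Submodule R ((σ → R) → R)}
    (hC : ∀ c ∈ C, ∃ f : MvPolynomial σ R, f.totalDegree ≤ 1 ∧ ∀ a, MvPolynomial.eval a f = c a) :
    C ≤ affineFunctions R (σ → R) := fun c hc => by
  obtain ⟨f, hf, hfc⟩ := hC c hc
  simpa only [← funext hfc] using MvPolynomial.eval_mem_affineFunctions hf

theorem stmt_10_general {F : Type*} [Field F] [Fintype F] {m i : ℕ}
    (C : Submodule F ((Fin m → F) → F))
    (hC : ∀ c, c ∈ C ↔ ∃ f : MvPolynomial (Fin m) F,
      f.totalDegree ≤ 1 ∧ ∀ a : Fin m → F, MvPolynomial.eval a f = c a)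
    (supp : Submodule F ((Fin m → F) → F) → Set (Fin m → F))
    (hsupp : ∀ D, supp D = {a : Fin m → F | ∃ c ∈ D, c a ≠ 0})
    (D : Submodule F ((Fin m → F) → F)) (hD : D ≤ C)
    (hdim : Module.finrank F D = i) :
    (((supp D).ncard : ℚ) = (Fintype.card F : ℚ) ^ m ∨
      ((supp D).ncard : ℚ) = (Fintype.card F : ℚ) ^ m -
        (Fintype.card F : ℚ) ^ ((m : ℤ) - (i : ℤ))) ∧
    ((∀ D' : Submodule F ((Fin m → F) → F), D' ≤ C → Module.finrank F D' = i →
        supp D' ⊆ supp D → supp D' = supp D) →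
      ((supp D).ncard : ℚ) = (Fintype.card F : ℚ) ^ m -
        (⌊(Fintype.card F : ℚ) ^ ((m : ℤ) - (i : ℤ))⌋ : ℚ)) := by
  set q := Fintype.card F
  have hCaff := le_affineFunctions_of_forall_totalDegree_le_one fun c hc => (hC c).mp hc
  have hsuppZ : ∀ D', supp D' = (commonZeroSet D')ᶜ := fun D' => by
    rw [hsupp, compl_commonZeroSet]
  have hweight : ∀ D', ((supp D').ncard : ℚ) = q ^ m - (commonZeroSet D').ncard := fun D' => by
    rw [hsuppZ, eq_sub_iff_add_eq', ← Nat.cast_add, Set.ncard_add_ncard_compl]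
    simp [Nat.card_eq_fintype_card, q]
  by_cases h1 : (1 : (Fin m → F) → F) ∈ D
  · have hZ := commonZeroSet_eq_empty_of_one_mem h1
    have hfull : ((supp D).ncard : ℚ) = q ^ m := by simp [hweight, hZ]
    refine ⟨Or.inl hfull, fun hmin => ?_⟩
    have hmi : m < i := by
      by_contra! him
      have hcoord (j : Fin m) : (fun a : Fin m → F => a j) ∈ C :=
        (hC _).mpr ⟨.X j, (MvPolynomial.totalDegree_X j).le, fun _ => MvPolynomial.eval_X _⟩
      obtain ⟨D', hD'C, hD'i, h0⟩ :=
        exists_finrank_eq_zero_mem_commonZeroSet hcoord (by simpa using him)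
      have hD'Z := hmin D' hD'C hD'i (by simp [hsuppZ, hZ])
      simp only [hsuppZ, hZ, Set.compl_empty, Set.compl_univ_iff] at hD'Z
      exact Set.eq_empty_iff_forall_notMem.mp hD'Z _ h0
    have hlt : (q : ℚ) ^ ((m : ℤ) - i) < 1 :=
      zpow_lt_one_of_neg₀ (by exact_mod_cast Fintype.one_lt_card) (by omega)
    rw [hfull, Int.floor_eq_zero_iff.mpr ⟨by positivity, hlt⟩]
    simp
  · have him := finrank_le_of_one_notMem (hD.trans hCaff) h1
    have hZ := ncard_commonZeroSet_of_one_notMem (hD.trans hCaff) h1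
    rw [finrank_fin_fun, hdim] at him hZ
    have hpow : (q : ℚ) ^ ((m : ℤ) - i) = ((q ^ (m - i) : ℕ) : ℚ) := by
      rw [← Nat.cast_sub him, zpow_natCast, Nat.cast_pow]
    have hweightD : ((supp D).ncard : ℚ) = q ^ m - (q : ℚ) ^ ((m : ℤ) - i) := by
      rw [hweight, hZ, hpow]
    exact ⟨Or.inr hweightD, fun _ => by rw [hweightD, hpow, Int.floor_natCast, Int.cast_natCast]⟩

/-- Every `i`-dimensional subcode `D` of the first order Reed–Muller code
`RM_q(1,m)` (image of the evaluation map on polynomials of degree ≤ 1, with coordinates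
indexed by the points of `F_q^m`) has support weight `q^m` or `q^m - q^{m-i}`; and every
`i`-minimal subcode has support weight `q^m - ⌊q^{m-i}⌋`. -/
theorem stmt_10 {F : Type*} [Field F] [Fintype F] {m i : ℕ} (hi : 1 ≤ i)
    (C : Submodule F ((Fin m → F) → F))
    (hC : ∀ c, c ∈ C ↔ ∃ f : MvPolynomial (Fin m) F,
      f.totalDegree ≤ 1 ∧ ∀ a : Fin m → F, MvPolynomial.eval a f = c a)
    (supp : Submodule F ((Fin m → F) → F) → Set (Fin m → F))
    (hsupp : ∀ D, supp D = {a : Fin m → F | ∃ c ∈ D, c a ≠ 0})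
    (D : Submodule F ((Fin m → F) → F)) (hD : D ≤ C)
    (hdim : Module.finrank F D = i) :
    (((supp D).ncard : ℚ) = (Fintype.card F : ℚ) ^ m ∨
      ((supp D).ncard : ℚ) = (Fintype.card F : ℚ) ^ m -
        (Fintype.card F : ℚ) ^ ((m : ℤ) - (i : ℤ))) ∧
    ((∀ D' : Submodule F ((Fin m → F) → F), D' ≤ C → Module.finrank F D' = i →
        supp D' ⊆ supp D → supp D' = supp D) →
      ((supp D).ncard : ℚ) = (Fintype.card F : ℚ) ^ m -
        (⌊(Fintype.card F : ℚ) ^ ((m : ℤ) - (i : ℤ))⌋ : ℚ)) :=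
  stmt_10_general C hC supp hsupp D hD hdim
end

section
/- The number of F_{q^2}-rational points of the Hermitian variety in PG(k-1, q^2) defined by X_1^{q+1} + ⋯ + X_k^{q+1} = 0 equals (q^k - (-1)^k)(q^{k-1} - (-1)^{k-1})/(q^2 - 1), for k ≥ 2. -/
/-!
Let `N_k(c)` be the number of `x ∈ K^k` with `∑ xᵢ^(q+1) = c`. All such sums lie in the
subfield `F = {c | c^q = c}`, which has `q` elements, and since `Kˣ` is cyclic of order
`(q+1)(q-1)` the norm `a ↦ a^(q+1)` maps `Kˣ` onto `Fˣ`. Scaling `x` by `a` multiplies the sum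
by `a^(q+1)`, so `N_k` takes a single value `b_k` on `Fˣ`. Counting all of `K^k` gives
`N_k(0) + (q-1) b_k = q^(2k)`, and splitting off one coordinate gives
`N_(k+1)(0) = N_k(0) + (q^2-1) b_k`; together they yield
`N_k(0) = q^(2k-1) + (-1)^k (q-1) q^(k-1)`. Each point of the projective variety accounts for
exactly `q^2-1` nonzero solutions.
-/

open Finset
open scoped LinearAlgebra.Projectivization

theorem IsCyclic.range_powMonoidHom_eq_ker {G : Type*} [CommGroup G] [IsCyclic G] [Finite G]
    {m n : ℕ} (h : Nat.card G = m * n) :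
    (powMonoidHom m : G →* G).range = (powMonoidHom n).ker := by
  have hm : 0 < m := Nat.pos_of_mul_pos_right (h ▸ Nat.card_pos)
  refine Subgroup.eq_of_le_of_card_ge ?_ ?_
  · rintro _ ⟨x, rfl⟩
    rw [MonoidHom.mem_ker, powMonoidHom_apply, powMonoidHom_apply, ← pow_mul, ← h,
      pow_card_eq_one']
  · rw [IsCyclic.card_powMonoidHom_ker, IsCyclic.card_powMonoidHom_range, h,
      Nat.gcd_mul_left_left, Nat.gcd_mul_right_left, Nat.mul_div_cancel_left _ hm]

theorem Units.pow_sub_one_eq_one_iff {M : Type*} [Monoid M] {n : ℕ} (hn : n ≠ 0) (u : Mˣ) :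
    u ^ (n - 1) = 1 ↔ (u : M) ^ n = u := by
  rw [← Units.val_pow_eq_pow_val, Units.val_inj, ← pow_sub_one_mul hn, mul_eq_right]

namespace FiniteField

variable {K : Type*} [Field K] [Fintype K] {q : ℕ}

theorem exists_ringHom_pow_eq_of_dvd_card (hq : q ∣ Fintype.card K) :
    ∃ φ : K →+* K, ∀ x, φ x = x ^ q := by
  obtain ⟨n, hp, hcard⟩ := FiniteField.card K (ringChar K)
  obtain ⟨m, -, rfl⟩ := (Nat.dvd_prime_pow hp).mp (hcard ▸ hq)
  have : ExpChar K (ringChar K) := ExpChar.prime hp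
  exact ⟨iterateFrobenius K (ringChar K) m, iterateFrobenius_def _ _⟩

variable (hq : Fintype.card K = q ^ 2)
include hq

theorem one_lt_of_card_eq_sq : 1 < q := by
  have := Fintype.one_lt_card (α := K)
  rw [hq] at this
  exact (Nat.one_lt_pow_iff two_ne_zero).mp this

theorem exists_ringHom_pow_eq_of_card_eq_sq : ∃ φ : K →+* K, ∀ x, φ x = x ^ q :=
  exists_ringHom_pow_eq_of_dvd_card (hq ▸ Dvd.intro_left _ (sq q).symm)

theorem sum_pow_succ_pow_eq_self {ι : Type*} (s : Finset ι) (x : ι → K) :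
    (∑ i ∈ s, x i ^ (q + 1)) ^ q = ∑ i ∈ s, x i ^ (q + 1) := by
  obtain ⟨φ, hφ⟩ := exists_ringHom_pow_eq_of_card_eq_sq hq
  rw [← hφ, map_sum]
  refine sum_congr rfl fun i _ => ?_
  rw [hφ, ← pow_mul, show (q + 1) * q = q ^ 2 + q by ring, pow_add, ← hq, pow_card, pow_succ']

theorem neg_one_pow_eq_neg_one : (-1 : K) ^ q = -1 := by
  obtain ⟨φ, hφ⟩ := exists_ringHom_pow_eq_of_card_eq_sq hq
  rw [← hφ, map_neg, map_one]

theorem card_units_eq_mul : Nat.card Kˣ = (q + 1) * (q - 1) := by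
  rw [Nat.card_units, Nat.card_eq_fintype_card, hq, ← Nat.sq_sub_sq, one_pow]

theorem exists_pow_succ_eq {c : K} (hc0 : c ≠ 0) (hc : c ^ q = c) :
    ∃ a : K, a ^ (q + 1) = c := by
  have hker : Units.mk0 c hc0 ∈ (powMonoidHom (q - 1) : Kˣ →* Kˣ).ker :=
    (Units.pow_sub_one_eq_one_iff (one_lt_of_card_eq_sq hq).ne_bot _).mpr hc
  rw [← IsCyclic.range_powMonoidHom_eq_ker (card_units_eq_mul hq)] at hker
  obtain ⟨a, ha⟩ := hker
  exact ⟨a, congrArg Units.val ha⟩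

theorem card_filter_pow_eq_self [DecidableEq K] : #{c : K | c ^ q = c} = q := by
  have hq1 := one_lt_of_card_eq_sq hq
  have hker : Nat.card (powMonoidHom (q - 1) : Kˣ →* Kˣ).ker = q - 1 := by
    rw [IsCyclic.card_powMonoidHom_ker, card_units_eq_mul hq, Nat.gcd_mul_left_left]
  have e : (powMonoidHom (q - 1) : Kˣ →* Kˣ).ker ≃ {c : K // c ≠ 0 ∧ c ^ q = c} :=
    (unitsEquivNeZero.subtypeEquiv fun u => Units.pow_sub_one_eq_one_iff hq1.ne_bot u).trans
      (Equiv.subtypeSubtypeEquivSubtypeInter _ _)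
  have hzero : (0 : K) ∈ ({c : K | c ^ q = c} : Finset K) := by
    simp [zero_pow (by omega : q ≠ 0)]
  have herase :
      ({c : K | c ^ q = c} : Finset K).erase 0 = ({c | c ≠ 0 ∧ c ^ q = c} : Finset K) := by
    ext; simp
  rw [← card_erase_add_one hzero, herase, ← Fintype.card_subtype, ← Nat.card_eq_fintype_card,
    ← Nat.card_congr e, hker]
  omega

end FiniteField

theorem Projectivization.card_ne_zero_and_eq_card_mul {k V : Type*} [DivisionRing k]
    [AddCommGroup V] [Module k V] (P : V → Prop)
    (hP : ∀ (a : kˣ) (v : V), P (a • v) ↔ P v) :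
    Nat.card {v : V // v ≠ 0 ∧ P v} = Nat.card {p : ℙ k V // P p.rep} * Nat.card kˣ := by
  have hrep (v : {v : V // v ≠ 0}) : P v ↔ P (mk k v.1 v.2).rep := by
    obtain ⟨a, ha⟩ := exists_smul_eq_mk_rep k v.1 v.2
    rw [← ha, hP]
  rw [← Nat.card_prod]
  exact Nat.card_congr <| (Equiv.subtypeSubtypeEquivSubtypeInter _ P).symm.trans <|
    ((nonZeroEquivProjectivizationProdUnits k V).subtypeEquiv hrep).trans
      Equiv.prodSubtypeFstEquivSubtypeProd

section PowSumCount

variable {K : Type*} [Fintype K] [DecidableEq K]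

def powSumCount [CommRing K] (n k : ℕ) (c : K) : ℕ := #{x : Fin k → K | ∑ i, x i ^ n = c}

theorem powSumCount_zero_zero [CommRing K] (n : ℕ) : powSumCount n 0 (0 : K) = 1 := by
  simp [powSumCount]

theorem powSumCount_succ [CommRing K] (n k : ℕ) (c : K) :
    powSumCount n (k + 1) c = ∑ t, powSumCount n k (c - t ^ n) := by
  rw [powSumCount, card_eq_sum_card_fiberwise (f := fun x => x 0) (t := univ) (by simp)]
  refine sum_congr rfl fun t _ => ?_
  refine card_nbij' Fin.tail (fun y => Fin.cons t y) ?_ ?_ ?_ ?_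
  · intro x hx
    simp only [mem_coe, mem_filter, mem_univ, true_and] at hx ⊢
    rw [← hx.1, Fin.sum_univ_succ, hx.2, add_sub_cancel_left]
    rfl
  · intro y hy
    simp only [mem_coe, mem_filter, mem_univ, true_and] at hy ⊢
    simp [Fin.sum_univ_succ, hy]
  · intro x hx
    simp only [mem_coe, mem_filter, mem_univ, true_and] at hx
    simp [← hx.2]
  · intro y _
    simp

theorem powSumCount_mul_pow [Field K] {a : K} (ha : a ≠ 0) (n k : ℕ) (c : K) :
    powSumCount n k (a ^ n * c) = powSumCount n k c := by
  have hsum (b : K) (x : Fin k → K) : ∑ i, (b • x) i ^ n = b ^ n * ∑ i, x i ^ n := by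
    simp [mul_pow, mul_sum]
  refine card_nbij' (a⁻¹ • ·) (a • ·) ?_ ?_ ?_ ?_
  · intro x hx
    simp only [mem_coe, mem_filter, mem_univ, true_and] at hx ⊢
    rw [hsum, hx, ← mul_assoc, ← mul_pow, inv_mul_cancel₀ ha, one_pow, one_mul]
  · intro x hx
    simp only [mem_coe, mem_filter, mem_univ, true_and] at hx ⊢
    rw [hsum, hx]
  · intro x _
    simp [smul_smul, ha]
  · intro x _
    simp [smul_smul, ha]

theorem sum_powSumCount [CommRing K] {n k : ℕ} (T : Finset K)
    (hT : ∀ x : Fin k → K, ∑ i, x i ^ n ∈ T) :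
    ∑ c ∈ T, powSumCount n k c = Fintype.card K ^ k := by
  simp only [powSumCount]
  rw [← card_eq_sum_card_fiberwise fun x _ => hT x, card_univ, Fintype.card_fun, Fintype.card_fin]

theorem powSumCount_succ_zero [Field K] {n : ℕ} (hn : n ≠ 0) (k : ℕ) :
    powSumCount n (k + 1) (0 : K) =
      powSumCount n k (0 : K) + (Fintype.card K - 1) * powSumCount n k (-1 : K) := by
  rw [powSumCount_succ, ← add_sum_erase _ _ (mem_univ 0), zero_pow hn, sub_zero,
    sum_congr rfl fun t ht => by
      rw [zero_sub, ← mul_neg_one, powSumCount_mul_pow (ne_of_mem_erase ht)],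
    sum_const, card_erase_of_mem (mem_univ _), card_univ, smul_eq_mul]

theorem powSumCount_zero_eq_one_add_mul_ncard [Field K] {n : ℕ} (hn : n ≠ 0) (k : ℕ) :
    powSumCount n k (0 : K) =
      1 + (Fintype.card K - 1) * {p : ℙ K (Fin k → K) | ∑ i, p.rep i ^ n = 0}.ncard := by
  have hP (a : Kˣ) (v : Fin k → K) : ∑ i, (a • v) i ^ n = 0 ↔ ∑ i, v i ^ n = 0 := by
    simp [Units.smul_def, mul_pow, ← mul_sum]
  have hcone :=
    Projectivization.card_ne_zero_and_eq_card_mul (fun v : Fin k → K => ∑ i, v i ^ n = 0) hP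
  rw [Nat.card_units, Nat.card_eq_fintype_card (α := K), mul_comm] at hcone
  have hzero : (0 : Fin k → K) ∈ ({v | ∑ i, v i ^ n = 0} : Finset (Fin k → K)) := by
    simp [zero_pow hn]
  have herase : ({v | ∑ i, v i ^ n = 0} : Finset (Fin k → K)).erase 0 =
      ({v | v ≠ 0 ∧ ∑ i, v i ^ n = 0} : Finset (Fin k → K)) := by
    ext; simp
  rw [powSumCount, ← card_erase_add_one hzero, herase, ← Fintype.card_subtype,
    ← Nat.card_eq_fintype_card, hcone, add_comm]
  rfl

end PowSumCount

section Hermitian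

variable {K : Type*} [Field K] [Fintype K] [DecidableEq K] {q : ℕ}
  (hq : Fintype.card K = q ^ 2)
include hq

theorem powSumCount_eq_one_of_pow_eq_self {c : K} (hc0 : c ≠ 0) (hc : c ^ q = c) (k : ℕ) :
    powSumCount (q + 1) k c = powSumCount (q + 1) k (1 : K) := by
  obtain ⟨a, rfl⟩ := FiniteField.exists_pow_succ_eq hq hc0 hc
  simpa using powSumCount_mul_pow (ne_zero_pow q.add_one_ne_zero hc0) (q + 1) k 1

theorem powSumCount_zero_add_sub_one_mul (k : ℕ) :
    powSumCount (q + 1) k (0 : K) + (q - 1) * powSumCount (q + 1) k (1 : K) = q ^ (2 * k) := by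
  have hq1 := FiniteField.one_lt_of_card_eq_sq hq
  have h0 : (0 : K) ∈ ({c | c ^ q = c} : Finset K) := by simp [zero_pow (by omega : q ≠ 0)]
  have htotal := sum_powSumCount (n := q + 1) (k := k) ({c | c ^ q = c} : Finset K)
    fun x => by simpa using FiniteField.sum_pow_succ_pow_eq_self hq univ x
  rw [← add_sum_erase _ _ h0, sum_congr rfl fun c hc => powSumCount_eq_one_of_pow_eq_self hq
      (ne_of_mem_erase hc) (by simpa using mem_of_mem_erase hc) k,
    sum_const, card_erase_of_mem h0, FiniteField.card_filter_pow_eq_self hq, smul_eq_mul, hq,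
    ← pow_mul] at htotal
  exact htotal

theorem powSumCount_succ_zero_of_card_eq_sq (k : ℕ) :
    (powSumCount (q + 1) (k + 1) (0 : K) : ℤ) =
      (q + 1) * q ^ (2 * k) - q * powSumCount (q + 1) k (0 : K) := by
  have hq1 := FiniteField.one_lt_of_card_eq_sq hq
  have hrec := powSumCount_succ_zero (K := K) q.add_one_ne_zero k
  rw [hq, powSumCount_eq_one_of_pow_eq_self hq (neg_ne_zero.mpr one_ne_zero)
    (FiniteField.neg_one_pow_eq_neg_one hq)] at hrec
  have htotal := powSumCount_zero_add_sub_one_mul hq k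
  zify [hq1.le, Nat.one_le_pow _ _ (by omega : 0 < q)] at hrec htotal
  linear_combination hrec + (q + 1) * htotal

theorem powSumCount_succ_zero_eq (k : ℕ) :
    (powSumCount (q + 1) (k + 1) (0 : K) : ℤ) =
      q ^ (2 * k + 1) + (-1) ^ (k + 1) * (q - 1) * q ^ k := by
  induction k with
  | zero => rw [powSumCount_succ_zero_of_card_eq_sq hq, powSumCount_zero_zero]; ring
  | succ k ih => rw [powSumCount_succ_zero_of_card_eq_sq hq, ih]; ring

end Hermitian

/-- The number of points of the Hermitian variety
`X_1^{q+1} + ⋯ + X_k^{q+1} = 0` in `PG(k-1, q²)` equals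
`(q^k - (-1)^k)(q^{k-1} - (-1)^{k-1})/(q² - 1)`, for `k ≥ 2`. -/
theorem stmt_16 {K : Type*} [Field K] [Fintype K] {q k : ℕ}
    (hq : Fintype.card K = q ^ 2) (hk : 2 ≤ k) :
    (({p : Projectivization K (Fin k → K) |
        ∑ i, (p.rep i) ^ (q + 1) = 0}).ncard : ℚ) =
      ((q : ℚ) ^ k - (-1 : ℚ) ^ k) * ((q : ℚ) ^ (k - 1) - (-1 : ℚ) ^ (k - 1)) /
        ((q : ℚ) ^ 2 - 1) := by
  classical
  obtain ⟨j, rfl⟩ : ∃ j, k = j + 1 := ⟨k - 1, by omega⟩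
  have hq1 := FiniteField.one_lt_of_card_eq_sq hq
  have hq1' : (1 : ℚ) < q := by exact_mod_cast hq1
  have hcount := powSumCount_zero_eq_one_add_mul_ncard (K := K) q.add_one_ne_zero (j + 1)
  have hform := powSumCount_succ_zero_eq hq j
  rw [hq] at hcount
  have hsign : ((-1 : ℚ) ^ j) ^ 2 = 1 := by rw [← pow_mul, mul_comm, pow_mul]; norm_num
  rw [Nat.add_sub_cancel, eq_div_iff (by nlinarith)]
  qify [Nat.one_le_pow _ _ (by omega : 0 < q)] at hcount hform
  linear_combination hform - hcount + hsign
end
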